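/- arXiv:2104.03585 — 2 statements merged into one kernel-verified Lean document; each statement's English description precedes it below -/
import Mathlib

section
/- Let (X, 𝒜, μ) be a non-atomic probability space and 𝒯 a tree in 𝒜. Then for every I ∈ 𝒯 and every α with 0 < α < 1, there exists a subfamily ℱ of 𝒯 consisting of pairwise almost disjoint subsets of I such that μ(⋃_{J∈ℱ} J) = Σ_{J∈ℱ} μ(J) = (1 − α)·μ(I). -/
open MeasureTheory Filter Set

noncomputable section

/-- The generations of a tree: generation 0 is `{univ}`, and generation `n+1`
consists of the children (via `C`) of elements of generation `n`. -/
def treeGen {X : Type*} (C : Set X → Set (Set X)) : ℕ → Set (Set X)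
  | 0 => {Set.univ}
  | n + 1 => ⋃ I ∈ treeGen C n, C I

/-- `T` is a tree on the measure space `(X, μ)` with child assignment `C`. -/
structure IsTree {X : Type*} [MeasurableSpace X] (μ : Measure X)
    (T : Set (Set X)) (C : Set X → Set (Set X)) : Prop where
  univ_mem : Set.univ ∈ T
  meas : ∀ I ∈ T, MeasurableSet I
  pos : ∀ I ∈ T, 0 < μ I
  child_sub : ∀ I ∈ T, C I ⊆ T
  child_countable : ∀ I ∈ T, (C I).Countable
  child_nontrivial : ∀ I ∈ T, ∃ J ∈ C I, ∃ J' ∈ C I, J ≠ J'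
  child_almost_disjoint : ∀ I ∈ T, ∀ J ∈ C I, ∀ J' ∈ C I, J ≠ J' → μ (J ∩ J') = 0
  child_cover : ∀ I ∈ T, I = ⋃₀ C I
  eq_iUnion_gen : T = ⋃ n, treeGen C n
  tendsto_gen : Filter.Tendsto (fun n => ⨆ I ∈ treeGen C n, μ I) Filter.atTop (nhds 0)

/-- The dyadic maximal operator associated with the tree `T`. -/
def maxOp {X : Type*} [MeasurableSpace X] (μ : Measure X) (T : Set (Set X))
    (φ : X → ℝ) (x : X) : ℝ :=
  sSup {r : ℝ | ∃ I ∈ T, x ∈ I ∧ r = (∫ y in I, |φ y| ∂μ) / (μ I).toReal}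

/-! Greedy selection. Since `μ K` is the sum of the measures of the children of `K`, for any
target `t < μ K` some finite set of children has total measure at most `t` while one further
child `J` overshoots; keep that finite set and continue inside `J` with the residual target,
which is `< μ J`. After `n` steps the residual is bounded by the measure of a set of generation
`n + const`, so it tends to `0` and the selected sets have total measure exactly `t`. They are
pairwise almost disjoint because each batch is a.e. disjoint from the child where the search
continues. -/

open Topology
open scoped ENNReal

theorem Finset.exists_sum_le_lt_sum_add {ι M : Type*} [AddCommMonoid M] [LinearOrder M]
    (f : ι → M) {r : M} (hr : 0 ≤ r) {s : Finset ι} (h : r < ∑ i ∈ s, f i) :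
    ∃ t ⊆ s, ∃ i ∈ s, i ∉ t ∧ ∑ j ∈ t, f j ≤ r ∧ r < ∑ j ∈ t, f j + f i := by
  classical
  induction s using Finset.induction_on with
  | empty => exact absurd h (by simpa using hr)
  | insert a s ha ih =>
    rw [Finset.sum_insert ha] at h
    by_cases hs : r < ∑ i ∈ s, f i
    · obtain ⟨t, hts, i, his, hit, hle, hlt⟩ := ih hs
      exact ⟨t, hts.trans (Finset.subset_insert a s), i, Finset.mem_insert_of_mem his, hit, hle,
        hlt⟩
    · exact ⟨s, Finset.subset_insert a s, a, Finset.mem_insert_self a s, ha, not_lt.mp hs,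
        by rwa [add_comm] at h⟩

theorem ENNReal.tsum_eq_of_add_eq_of_tendsto_zero {a b : ℕ → ℝ≥0∞}
    (h : ∀ n, a n + b (n + 1) = b n) (hb : Tendsto b atTop (𝓝 0)) : ∑' n, a n = b 0 := by
  have partial_sum : ∀ N, ∑ n ∈ Finset.range N, a n + b N = b 0 := by
    intro N
    induction N with
    | zero => simp
    | succ N ih => rw [Finset.sum_range_succ, add_assoc, h, ih]
  have := (ENNReal.tendsto_nat_tsum a).add hb
  simp only [partial_sum, add_zero] at this
  exact tendsto_nhds_unique this tendsto_const_nhds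

theorem mem_treeGen_succ {X : Type*} {C : Set X → Set (Set X)} {I J : Set X} {n : ℕ}
    (hI : I ∈ treeGen C n) (hJ : J ∈ C I) : J ∈ treeGen C (n + 1) :=
  mem_iUnion₂.mpr ⟨I, hI, hJ⟩

section Tree

variable {X : Type*} [MeasurableSpace X] {μ : Measure X} {T : Set (Set X)}
  {C : Set X → Set (Set X)}

namespace IsTree

variable (hT : IsTree μ T C)
include hT

theorem exists_mem_treeGen {I : Set X} (hI : I ∈ T) : ∃ n, I ∈ treeGen C n :=
  mem_iUnion.mp (hT.eq_iUnion_gen ▸ hI)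

theorem subset_of_mem_child {K J : Set X} (hK : K ∈ T) (hJ : J ∈ C K) : J ⊆ K :=
  (hT.child_cover K hK).symm ▸ subset_sUnion_of_mem hJ

theorem measure_eq_tsum_children {K : Set X} (hK : K ∈ T) : μ K = ∑' J : C K, μ J := by
  conv_lhs => rw [hT.child_cover K hK]
  exact measure_sUnion₀ (hT.child_countable K hK)
    (fun J hJ J' hJ' => hT.child_almost_disjoint K hK J hJ J' hJ')
    (fun J hJ => (hT.meas J (hT.child_sub K hK hJ)).nullMeasurableSet)

theorem exists_finset_children_sum_add_eq {K : Set X} (hK : K ∈ T) {r : ℝ≥0∞} (hr : r < μ K) :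
    ∃ S : Finset (Set X), ↑S ⊆ C K ∧ ∃ J ∈ C K, J ∉ S ∧ ∃ r' < μ J, ∑ J' ∈ S, μ J' + r' = r := by
  rw [hT.measure_eq_tsum_children hK, ENNReal.tsum_eq_iSup_sum, lt_iSup_iff] at hr
  obtain ⟨s, hs⟩ := hr
  obtain ⟨t, -, J, -, hJt, hle, hlt⟩ :=
    Finset.exists_sum_le_lt_sum_add (fun J : C K => μ J) zero_le hs
  refine ⟨t.map (Function.Embedding.subtype _), by simp, J, J.2, by simpa using hJt,
    r - ∑ J' ∈ t, μ J', ENNReal.sub_lt_of_lt_add hle (by rwa [add_comm] at hlt), ?_⟩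
  rw [Finset.sum_map]
  exact add_tsub_cancel_of_le hle

end IsTree

/-- A run of the greedy selection: at step `n` the residual `r n` of the target measure still has
to be collected inside `K n`; the children in `S n` are taken whole, and the rest `r (n + 1)` is
sought inside a further child `K (n + 1)`. -/
structure IsGreedyChain (μ : Measure X) (C : Set X → Set (Set X)) (K : ℕ → Set X)
    (r : ℕ → ℝ≥0∞) (S : ℕ → Finset (Set X)) : Prop where
  batch_subset : ∀ n, ↑(S n) ⊆ C (K n)
  succ_mem : ∀ n, K (n + 1) ∈ C (K n)
  succ_not_mem : ∀ n, K (n + 1) ∉ S n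
  sum_add : ∀ n, ∑ J ∈ S n, μ J + r (n + 1) = r n
  lt_measure : ∀ n, r n < μ (K n)

theorem IsTree.exists_isGreedyChain (hT : IsTree μ T C) {K₀ : Set X} (hK₀ : K₀ ∈ T)
    {t : ℝ≥0∞} (ht : t < μ K₀) : ∃ K r S, K 0 = K₀ ∧ r 0 = t ∧ IsGreedyChain μ C K r S := by
  let State := {p : Set X × ℝ≥0∞ // p.1 ∈ T ∧ p.2 < μ p.1}
  have step : ∀ p : State, ∃ (S : Finset (Set X)) (q : State),
      ↑S ⊆ C p.1.1 ∧ q.1.1 ∈ C p.1.1 ∧ q.1.1 ∉ S ∧ ∑ J ∈ S, μ J + q.1.2 = p.1.2 := by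
    rintro ⟨⟨K, r⟩, hK, hr⟩
    obtain ⟨S, hS, J, hJ, hJS, r', hr', hsum⟩ := hT.exists_finset_children_sum_add_eq hK hr
    exact ⟨S, ⟨(J, r'), hT.child_sub K hK hJ, hr'⟩, hS, hJ, hJS, hsum⟩
  choose S next hS hnext hnotin hsum using step
  let p : ℕ → State := fun n => next^[n] ⟨(K₀, t), hK₀, ht⟩
  have hp : ∀ n, p (n + 1) = next (p n) := fun n => Function.iterate_succ_apply' next n _
  refine ⟨fun n => (p n).1.1, fun n => (p n).1.2, fun n => S (p n), rfl, rfl,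
    fun n => hS (p n), fun n => ?_, fun n => ?_, fun n => ?_, fun n => (p n).2.2⟩
  · rw [hp]; exact hnext (p n)
  · rw [hp]; exact hnotin (p n)
  · simp only [hp]; exact hsum (p n)

namespace IsGreedyChain

variable {K : ℕ → Set X} {r : ℕ → ℝ≥0∞} {S : ℕ → Finset (Set X)}
  (hc : IsGreedyChain μ C K r S)
include hc

theorem mem_treeGen {m : ℕ} (h0 : K 0 ∈ treeGen C m) (n : ℕ) : K n ∈ treeGen C (m + n) := by
  induction n with
  | zero => exact h0
  | succ n ih => exact mem_treeGen_succ ih (hc.succ_mem n)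

variable (hT : IsTree μ T C) (h0 : K 0 ∈ T)
include hT h0

theorem mem (n : ℕ) : K n ∈ T := by
  induction n with
  | zero => exact h0
  | succ n ih => exact hT.child_sub _ ih (hc.succ_mem n)

theorem antitone : Antitone K :=
  antitone_nat_of_succ_le fun n => hT.subset_of_mem_child (hc.mem hT h0 n) (hc.succ_mem n)

theorem subset_of_mem {n : ℕ} {J : Set X} (hJ : J ∈ S n) : J ⊆ K n :=
  hT.subset_of_mem_child (hc.mem hT h0 n) (hc.batch_subset n hJ)

theorem tendsto_residual : Tendsto r atTop (𝓝 0) := by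
  obtain ⟨m, hm⟩ := hT.exists_mem_treeGen h0
  have hsup : Tendsto (fun n => ⨆ I ∈ treeGen C (m + n), μ I) atTop (𝓝 0) :=
    hT.tendsto_gen.comp (tendsto_atTop_mono (fun n => Nat.le_add_left n m) tendsto_id)
  exact tendsto_of_tendsto_of_tendsto_of_le_of_le tendsto_const_nhds hsup (fun _ => zero_le)
    fun n => (hc.lt_measure n).le.trans (le_biSup μ (hc.mem_treeGen hm n))

theorem tsum_sum_measure : ∑' n, ∑ J ∈ S n, μ J = r 0 :=
  ENNReal.tsum_eq_of_add_eq_of_tendsto_zero hc.sum_add (hc.tendsto_residual hT h0)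

theorem aedisjoint_of_lt {n m : ℕ} (hnm : n < m) {J J' : Set X} (hJ : J ∈ S n)
    (hJ' : J' ∈ S m) : AEDisjoint μ J J' := by
  have hsucc : AEDisjoint μ J (K (n + 1)) :=
    hT.child_almost_disjoint _ (hc.mem hT h0 n) J (hc.batch_subset n hJ) _ (hc.succ_mem n)
      fun h => hc.succ_not_mem n (h ▸ hJ)
  exact hsucc.mono subset_rfl ((hc.subset_of_mem hT h0 hJ').trans (hc.antitone hT h0 hnm))

theorem pairwise_aedisjoint : (⋃ n, (S n : Set (Set X))).Pairwise (AEDisjoint μ) := by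
  simp only [Set.Pairwise, mem_iUnion, Finset.mem_coe]
  rintro J ⟨n, hJ⟩ J' ⟨m, hJ'⟩ hne
  rcases lt_trichotomy n m with hnm | rfl | hmn
  · exact hc.aedisjoint_of_lt hT h0 hnm hJ hJ'
  · exact hT.child_almost_disjoint _ (hc.mem hT h0 n) J (hc.batch_subset n hJ) J'
      (hc.batch_subset n hJ') hne
  · exact (hc.aedisjoint_of_lt hT h0 hmn hJ' hJ).symm

theorem pairwiseDisjoint_batches : univ.PairwiseDisjoint fun n => (S n : Set (Set X)) := by
  have not_mem_of_lt : ∀ {n m}, n < m → ∀ J ∈ S n, J ∉ S m := fun {n m} hnm J hJn hJm =>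
    (hT.pos J (hT.child_sub _ (hc.mem hT h0 n) (hc.batch_subset n hJn))).ne'
      (by simpa [AEDisjoint] using hc.aedisjoint_of_lt hT h0 hnm hJn hJm)
  intro n _ m _ hnm
  rw [Function.onFun, Finset.disjoint_coe, Finset.disjoint_left]
  rcases hnm.lt_or_gt with h | h
  · exact not_mem_of_lt h
  · exact fun J hJn hJm => not_mem_of_lt h J hJm hJn

end IsGreedyChain

theorem IsTree.exists_countable_pairwise_aedisjoint_tsum_eq (hT : IsTree μ T C) {K₀ : Set X}
    (hK₀ : K₀ ∈ T) {t : ℝ≥0∞} (ht : t < μ K₀) :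
    ∃ F ⊆ T, (∀ J ∈ F, J ⊆ K₀) ∧ F.Countable ∧ F.Pairwise (AEDisjoint μ) ∧
      ∑' J : F, μ J = t := by
  obtain ⟨K, r, S, rfl, rfl, hc⟩ := hT.exists_isGreedyChain hK₀ ht
  refine ⟨⋃ n, (S n : Set (Set X)), ?_, ?_, countable_iUnion fun n => (S n).countable_toSet,
    hc.pairwise_aedisjoint hT hK₀, ?_⟩
  · exact iUnion_subset fun n => (hc.batch_subset n).trans (hT.child_sub _ (hc.mem hT hK₀ n))
  · simp only [mem_iUnion, Finset.mem_coe, forall_exists_index]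
    exact fun J n hJ => (hc.subset_of_mem hT hK₀ hJ).trans (hc.antitone hT hK₀ n.zero_le)
  · rw [ENNReal.tsum_biUnion (hc.pairwiseDisjoint_batches hT hK₀)]
    simp only [Finset.coe_sort_coe, Finset.tsum_subtype]
    exact hc.tsum_sum_measure hT hK₀

end Tree

theorem stmt4_general {X : Type*} [MeasurableSpace X] (μ : Measure X)
    [IsProbabilityMeasure μ]
    (T : Set (Set X)) (C : Set X → Set (Set X)) (hT : IsTree μ T C)
    (I : Set X) (hI : I ∈ T) (α : ℝ) (hα0 : 0 < α) :
    ∃ F : Set (Set X), F ⊆ T ∧ (∀ J ∈ F, J ⊆ I) ∧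
      (∀ J ∈ F, ∀ J' ∈ F, J ≠ J' → μ (J ∩ J') = 0) ∧
      μ (⋃₀ F) = ENNReal.ofReal (1 - α) * μ I ∧
      (∑' J : F, μ (J : Set X)) = ENNReal.ofReal (1 - α) * μ I := by
  have hlt : ENNReal.ofReal (1 - α) * μ I < μ I := by
    have hα : ENNReal.ofReal (1 - α) < 1 := ENNReal.ofReal_lt_one.mpr (by linarith)
    simpa using ENNReal.mul_lt_mul_left (hT.pos I hI).ne' (measure_ne_top μ I) hα
  obtain ⟨F, hFT, hFI, hFc, hFd, hFsum⟩ :=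
    hT.exists_countable_pairwise_aedisjoint_tsum_eq hI hlt
  have hunion : μ (⋃₀ F) = ∑' J : F, μ J :=
    measure_sUnion₀ hFc hFd fun J hJ => (hT.meas J (hFT hJ)).nullMeasurableSet
  exact ⟨F, hFT, hFI, fun J hJ J' hJ' => hFd hJ hJ', hunion.trans hFsum, hFsum⟩

theorem stmt4 {X : Type*} [MeasurableSpace X] (μ : Measure X)
    [IsProbabilityMeasure μ] [NullSingletonClass μ]
    (T : Set (Set X)) (C : Set X → Set (Set X)) (hT : IsTree μ T C)
    (I : Set X) (hI : I ∈ T) (α : ℝ) (hα0 : 0 < α) (hα1 : α < 1) :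
    ∃ F : Set (Set X), F ⊆ T ∧ (∀ J ∈ F, J ⊆ I) ∧
      (∀ J ∈ F, ∀ J' ∈ F, J ≠ J' → μ (J ∩ J') = 0) ∧
      μ (⋃₀ F) = ENNReal.ofReal (1 - α) * μ I ∧
      (∑' J : F, μ (J : Set X)) = ENNReal.ofReal (1 - α) * μ I :=
  stmt4_general μ T C hT I hI α hα0
end
end

section
/- Let M₁ ≥ f > M₂ ≥ 0 be real numbers, and let g₀ ∈ 𝒜(M₁,f,M₂) be given by g₀(t) = M₁ for 0 ≤ t ≤ c and g₀(t) = M₂ for c < t < 1, where c = (f − M₂)/(M₁ − M₂). If g ∈ 𝒜(M₁,f,M₂) and g ≠ g₀, then I_g < f + (f − M₂)·log((M₁ − M₂)/(f − M₂)). -/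
open MeasureTheory Filter Set

noncomputable section

/-- `g` belongs to the class `𝒜(M₁, f, M₂)`: `g : [0,1) → [0,∞)` is decreasing,
left continuous on `(0,1)`, continuous at `0`, with `g 0 = M₁`,
`lim_{t→1⁻} g t = M₂` and `∫₀¹ g = f`. -/
def memA (M₁ f M₂ : ℝ) (g : ℝ → ℝ) : Prop :=
  (∀ t ∈ Set.Ico (0 : ℝ) 1, 0 ≤ g t) ∧
  (∀ s ∈ Set.Ico (0 : ℝ) 1, ∀ t ∈ Set.Ico (0 : ℝ) 1, s ≤ t → g t ≤ g s) ∧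
  (∀ t ∈ Set.Ioo (0 : ℝ) 1, Filter.Tendsto g (nhdsWithin t (Set.Iio t)) (nhds (g t))) ∧
  Filter.Tendsto g (nhdsWithin 0 (Set.Ioi 0)) (nhds (g 0)) ∧
  g 0 = M₁ ∧
  Filter.Tendsto g (nhdsWithin 1 (Set.Iio 1)) (nhds M₂) ∧
  (∫ t in Set.Ioo (0 : ℝ) 1, g t) = f

/-- `I_g = ∫₀¹ ((1/t) ∫₀ᵗ g(u) du) dt`. -/
def Ig (g : ℝ → ℝ) : ℝ :=
  ∫ t in Set.Ioo (0 : ℝ) 1, (1 / t) * ∫ u in Set.Ioo (0 : ℝ) t, g u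

/-! Write `G t = ∫₀ᵗ g`. Since `M₂ ≤ g ≤ M₁` and `∫₀¹ g = f`, we have both `G t ≤ M₁ t` and
`G t = f - ∫ₜ¹ g ≤ f - M₂ (1 - t)`. The smaller of these two bounds is the primitive `G₀` of `g₀`,
so `I_g = ∫₀¹ G t / t ≤ ∫₀¹ G₀ t / t = f + (f - M₂) log (1 / c)`. If `g ≠ g₀`, then, `g` being
decreasing, it exceeds `M₂` somewhere to the right of `c` or drops below `M₁` somewhere to the left
of `c` (left continuity settles the point `c` itself); either way `G < G₀` on a whole interval,
which makes the inequality strict. -/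

section IntervalIntegralBounds

variable {u v : ℝ → ℝ} {a b C : ℝ}

theorem mul_sub_le_intervalIntegral (hab : a ≤ b) (hu : IntervalIntegrable u volume a b)
    (h : ∀ x ∈ Ioo a b, C ≤ u x) : C * (b - a) ≤ ∫ x in a..b, u x := by
  simpa [mul_comm] using
    intervalIntegral.integral_mono_on_of_le_Ioo hab intervalIntegrable_const hu h

theorem intervalIntegral_le_mul_sub (hab : a ≤ b) (hu : IntervalIntegrable u volume a b)
    (h : ∀ x ∈ Ioo a b, u x ≤ C) : ∫ x in a..b, u x ≤ C * (b - a) := by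
  simpa [mul_comm] using
    intervalIntegral.integral_mono_on_of_le_Ioo hab hu intervalIntegrable_const h

theorem intervalIntegrable_of_continuousOn_of_abs_le (hab : a ≤ b)
    (hu : ContinuousOn u (Ioc a b)) (h : ∀ x ∈ Ioc a b, |u x| ≤ C) :
    IntervalIntegrable u volume a b :=
  (intervalIntegrable_iff_integrableOn_Ioc_of_le hab).2 <|
    Integrable.mono' (integrableOn_const (C := C) (by simp))
      (hu.aestronglyMeasurable measurableSet_Ioc) (ae_restrict_of_forall_mem measurableSet_Ioc h)

theorem intervalIntegral_lt_of_le_of_lt_on_Ioo {a' b' : ℝ} (hab : a ≤ b)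
    (hu : IntervalIntegrable u volume a b) (hv : IntervalIntegrable v volume a b)
    (hle : ∀ x ∈ Ioc a b, u x ≤ v x) (ha' : a ≤ a') (hab' : a' < b') (hb' : b' ≤ b)
    (hlt : ∀ x ∈ Ioo a' b', u x < v x) : ∫ x in a..b, u x < ∫ x in a..b, v x := by
  refine intervalIntegral.integral_lt_integral_of_ae_le_of_measure_setOfPred_lt_ne_zero hab hu hv
    (ae_restrict_of_forall_mem measurableSet_Ioc hle) ?_
  rw [Measure.restrict_apply' measurableSet_Ioc]
  refine ((Measure.measure_Ioo_pos _).2 hab').ne' ∘ measure_mono_null fun x hx => ?_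
  exact ⟨hlt x hx, ha'.trans_lt hx.1, hx.2.le.trans hb'⟩

end IntervalIntegralBounds

/-- `∫₀ᵗ g₀`, where `g₀` is `M₁` up to the point `c` with `(M₁ - M₂) c = f - M₂` and `M₂` after. -/
def extremalPrimitive (M₁ f M₂ t : ℝ) : ℝ :=
  min (M₁ * t) (f - M₂ + M₂ * t)

section Extremal

variable {M₁ f M₂ c t : ℝ}

theorem extremalPrimitive_of_le (h : (M₁ - M₂) * t ≤ f - M₂) :
    extremalPrimitive M₁ f M₂ t = M₁ * t :=
  min_eq_left (by linarith)

theorem extremalPrimitive_of_ge (h : f - M₂ ≤ (M₁ - M₂) * t) :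
    extremalPrimitive M₁ f M₂ t = f - M₂ + M₂ * t :=
  min_eq_right (by linarith)

theorem eqOn_inv_mul_extremalPrimitive_Ioo (hM : M₂ ≤ M₁) (hc : (M₁ - M₂) * c = f - M₂) :
    EqOn (fun t => 1 / t * extremalPrimitive M₁ f M₂ t) (fun _ => M₁) (Ioo 0 c) := by
  intro t ht
  show 1 / t * extremalPrimitive M₁ f M₂ t = M₁
  rw [extremalPrimitive_of_le (hc ▸ mul_le_mul_of_nonneg_left ht.2.le (sub_nonneg.2 hM))]
  field_simp [ht.1.ne']

theorem eqOn_inv_mul_extremalPrimitive_Ici (hM : M₂ ≤ M₁) (hc : (M₁ - M₂) * c = f - M₂)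
    (hc0 : 0 < c) :
    EqOn (fun t => 1 / t * extremalPrimitive M₁ f M₂ t) (fun t => M₂ + (f - M₂) * (1 / t))
      (Ici c) := by
  intro t ht
  show 1 / t * extremalPrimitive M₁ f M₂ t = M₂ + (f - M₂) * (1 / t)
  rw [extremalPrimitive_of_ge (hc ▸ mul_le_mul_of_nonneg_left ht (sub_nonneg.2 hM))]
  field_simp [(hc0.trans_le ht).ne']
  ring

theorem intervalIntegrable_inv_mul_extremalPrimitive_left (hM : M₂ ≤ M₁)
    (hc : (M₁ - M₂) * c = f - M₂) (hc0 : 0 ≤ c) :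
    IntervalIntegrable (fun t => 1 / t * extremalPrimitive M₁ f M₂ t) volume 0 c :=
  intervalIntegrable_const.congr_uIoo <| by
    rw [uIoo_of_le hc0]; exact (eqOn_inv_mul_extremalPrimitive_Ioo hM hc).symm

theorem continuousOn_inv_mul_extremalPrimitive_Ici (hM : M₂ ≤ M₁)
    (hc : (M₁ - M₂) * c = f - M₂) (hc0 : 0 < c) :
    ContinuousOn (fun t => 1 / t * extremalPrimitive M₁ f M₂ t) (Ici c) :=
  (continuousOn_const.add (continuousOn_const.mul (continuousOn_const.div continuousOn_id
    fun _ ht => (hc0.trans_le ht).ne'))).congr (eqOn_inv_mul_extremalPrimitive_Ici hM hc hc0)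

theorem intervalIntegrable_inv_mul_extremalPrimitive (hM : M₂ ≤ M₁)
    (hc : (M₁ - M₂) * c = f - M₂) (hc0 : 0 < c) (hc1 : c ≤ 1) :
    IntervalIntegrable (fun t => 1 / t * extremalPrimitive M₁ f M₂ t) volume 0 1 :=
  (intervalIntegrable_inv_mul_extremalPrimitive_left hM hc hc0.le).trans <|
    ((continuousOn_inv_mul_extremalPrimitive_Ici hM hc hc0).mono
      (by rw [uIcc_of_le hc1]; exact Icc_subset_Ici_self)).intervalIntegrable

theorem integral_inv_mul_extremalPrimitive (hM : M₂ ≤ M₁)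
    (hc : (M₁ - M₂) * c = f - M₂) (hc0 : 0 < c) (hc1 : c ≤ 1) :
    ∫ t in 0..1, 1 / t * extremalPrimitive M₁ f M₂ t = f + (f - M₂) * Real.log (1 / c) := by
  have hright : uIcc c 1 ⊆ Ici c := by rw [uIcc_of_le hc1]; exact Icc_subset_Ici_self
  have h0 : (0 : ℝ) ∉ uIcc c 1 := fun h => hc0.not_ge (hright h)
  rw [← intervalIntegral.integral_add_adjacent_intervals
      (intervalIntegrable_inv_mul_extremalPrimitive_left hM hc hc0.le)
      ((continuousOn_inv_mul_extremalPrimitive_Ici hM hc hc0).mono hright).intervalIntegrable,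
    intervalIntegral.integral_congr_Ioo_of_le hc0.le (eqOn_inv_mul_extremalPrimitive_Ioo hM hc),
    intervalIntegral.integral_congr ((eqOn_inv_mul_extremalPrimitive_Ici hM hc hc0).mono hright),
    intervalIntegral.integral_add intervalIntegrable_const
      ((intervalIntegral.intervalIntegrable_one_div (fun x hx => (hc0.trans_le (hright hx)).ne')
        continuousOn_id).const_mul _),
    intervalIntegral.integral_const_mul, integral_one_div h0, intervalIntegral.integral_const,
    intervalIntegral.integral_const, smul_eq_mul, smul_eq_mul]
  linear_combination hc

end Extremal

theorem Ig_eq_intervalIntegral (g : ℝ → ℝ) :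
    Ig g = ∫ t in 0..1, 1 / t * ∫ u in 0..t, g u := by
  rw [Ig, intervalIntegral.integral_of_le zero_le_one, integral_Ioc_eq_integral_Ioo]
  refine setIntegral_congr_fun measurableSet_Ioo fun t ht => ?_
  simp only [intervalIntegral.integral_of_le ht.1.le, integral_Ioc_eq_integral_Ioo]

namespace memA

variable {M₁ f M₂ : ℝ} {g : ℝ → ℝ}

theorem antitoneOn (hg : memA M₁ f M₂ g) : AntitoneOn g (Ico 0 1) :=
  fun s hs t ht hst => hg.2.1 s hs t ht hst

theorem apply_le (hg : memA M₁ f M₂ g) {t : ℝ} (ht : t ∈ Ico (0 : ℝ) 1) : g t ≤ M₁ :=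
  hg.2.2.2.2.1 ▸ hg.antitoneOn ⟨le_rfl, one_pos⟩ ht ht.1

theorem le_apply (hg : memA M₁ f M₂ g) {t : ℝ} (ht : t ∈ Ico (0 : ℝ) 1) : M₂ ≤ g t :=
  le_of_tendsto hg.2.2.2.2.2.1 <| by
    filter_upwards [Ioo_mem_nhdsLT ht.2] with s hs
    exact hg.antitoneOn ht ⟨ht.1.trans hs.1.le, hs.2⟩ hs.1.le

theorem M₂_le_M₁ (hg : memA M₁ f M₂ g) : M₂ ≤ M₁ :=
  (hg.le_apply ⟨le_rfl, one_pos⟩).trans (hg.apply_le ⟨le_rfl, one_pos⟩)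

theorem intervalIntegrable (hg : memA M₁ f M₂ g) : IntervalIntegrable g volume 0 1 :=
  (intervalIntegrable_iff_integrableOn_Ico_of_le zero_le_one).2 <|
    Integrable.mono' (integrableOn_const (C := M₁) (by simp))
      (aemeasurable_restrict_of_antitoneOn measurableSet_Ico hg.antitoneOn).aestronglyMeasurable
      (ae_restrict_of_forall_mem measurableSet_Ico fun t ht => by
        rw [Real.norm_eq_abs, abs_of_nonneg (hg.1 t ht)]
        exact hg.apply_le ht)

theorem intervalIntegrable_of_mem (hg : memA M₁ f M₂ g) {a b : ℝ} (ha : a ∈ Icc (0 : ℝ) 1)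
    (hb : b ∈ Icc (0 : ℝ) 1) : IntervalIntegrable g volume a b :=
  hg.intervalIntegrable.mono_set <| by
    rw [uIcc_of_le zero_le_one]; exact uIcc_subset_Icc ha hb

theorem primitive_add_tail (hg : memA M₁ f M₂ g) {t : ℝ} (ht : t ∈ Icc (0 : ℝ) 1) :
    (∫ u in 0..t, g u) + ∫ u in t..1, g u = f := by
  rw [intervalIntegral.integral_add_adjacent_intervals
    (hg.intervalIntegrable_of_mem ⟨le_rfl, zero_le_one⟩ ht)
    (hg.intervalIntegrable_of_mem ht ⟨zero_le_one, le_rfl⟩),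
    intervalIntegral.integral_of_le zero_le_one, integral_Ioc_eq_integral_Ioo, hg.2.2.2.2.2.2]

theorem primitive_nonneg (hg : memA M₁ f M₂ g) {t : ℝ} (ht : t ∈ Icc (0 : ℝ) 1) :
    0 ≤ ∫ u in 0..t, g u := by
  simpa using mul_sub_le_intervalIntegral ht.1
    (hg.intervalIntegrable_of_mem ⟨le_rfl, zero_le_one⟩ ht)
    fun x hx => hg.1 x ⟨hx.1.le, hx.2.trans_le ht.2⟩

theorem primitive_le_mul (hg : memA M₁ f M₂ g) {t : ℝ} (ht : t ∈ Icc (0 : ℝ) 1) :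
    ∫ u in 0..t, g u ≤ M₁ * t := by
  simpa using intervalIntegral_le_mul_sub ht.1
    (hg.intervalIntegrable_of_mem ⟨le_rfl, zero_le_one⟩ ht)
    fun x hx => hg.apply_le ⟨hx.1.le, hx.2.trans_le ht.2⟩

theorem mul_le_tail (hg : memA M₁ f M₂ g) {t : ℝ} (ht : t ∈ Icc (0 : ℝ) 1) :
    M₂ * (1 - t) ≤ ∫ u in t..1, g u :=
  mul_sub_le_intervalIntegral ht.2 (hg.intervalIntegrable_of_mem ht ⟨zero_le_one, le_rfl⟩)
    fun _ hx => hg.le_apply ⟨ht.1.trans hx.1.le, hx.2⟩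

theorem primitive_le_extremalPrimitive (hg : memA M₁ f M₂ g) {t : ℝ}
    (ht : t ∈ Icc (0 : ℝ) 1) : ∫ u in 0..t, g u ≤ extremalPrimitive M₁ f M₂ t :=
  le_min (hg.primitive_le_mul ht) (by linarith [hg.primitive_add_tail ht, hg.mul_le_tail ht])

theorem primitive_lt_of_lt_apply (hg : memA M₁ f M₂ g) {t t₀ : ℝ} (ht : 0 ≤ t) (htt₀ : t < t₀)
    (ht₀ : t₀ < 1) (hgt₀ : M₂ < g t₀) : ∫ u in 0..t, g u < f - M₂ + M₂ * t := by
  have hmem : t ∈ Icc (0 : ℝ) 1 := ⟨ht, (htt₀.trans ht₀).le⟩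
  have hmem₀ : t₀ ∈ Icc (0 : ℝ) 1 := ⟨ht.trans htt₀.le, ht₀.le⟩
  have hmid : g t₀ * (t₀ - t) ≤ ∫ u in t..t₀, g u :=
    mul_sub_le_intervalIntegral htt₀.le (hg.intervalIntegrable_of_mem hmem hmem₀) fun x hx =>
      hg.antitoneOn ⟨ht.trans hx.1.le, hx.2.trans ht₀⟩ ⟨hmem₀.1, ht₀⟩ hx.2.le
  have htail : (∫ u in t..1, g u) = (∫ u in t..t₀, g u) + ∫ u in t₀..1, g u :=
    (intervalIntegral.integral_add_adjacent_intervals (hg.intervalIntegrable_of_mem hmem hmem₀)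
      (hg.intervalIntegrable_of_mem hmem₀ ⟨zero_le_one, le_rfl⟩)).symm
  nlinarith [hg.primitive_add_tail hmem, hg.mul_le_tail hmem₀,
    mul_pos (sub_pos.2 hgt₀) (sub_pos.2 htt₀)]

theorem primitive_lt_of_apply_lt (hg : memA M₁ f M₂ g) {t t₀ : ℝ} (ht₀ : 0 ≤ t₀) (ht₀t : t₀ < t)
    (ht : t ≤ 1) (hgt₀ : g t₀ < M₁) : ∫ u in 0..t, g u < M₁ * t := by
  have hmem : t ∈ Icc (0 : ℝ) 1 := ⟨ht₀.trans ht₀t.le, ht⟩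
  have hmem₀ : t₀ ∈ Icc (0 : ℝ) 1 := ⟨ht₀, (ht₀t.trans_le ht).le⟩
  have hmid : ∫ u in t₀..t, g u ≤ g t₀ * (t - t₀) :=
    intervalIntegral_le_mul_sub ht₀t.le (hg.intervalIntegrable_of_mem hmem₀ hmem) fun x hx =>
      hg.antitoneOn ⟨ht₀, ht₀t.trans_le ht⟩ ⟨ht₀.trans hx.1.le, hx.2.trans_le ht⟩ hx.1.le
  have hsplit : (∫ u in 0..t, g u) = (∫ u in 0..t₀, g u) + ∫ u in t₀..t, g u :=
    (intervalIntegral.integral_add_adjacent_intervals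
      (hg.intervalIntegrable_of_mem ⟨le_rfl, zero_le_one⟩ hmem₀)
      (hg.intervalIntegrable_of_mem hmem₀ hmem)).symm
  nlinarith [hg.primitive_le_mul hmem₀, mul_pos (sub_pos.2 hgt₀) (sub_pos.2 ht₀t)]

theorem eq_ite_of_forall (hg : memA M₁ f M₂ g) {c : ℝ} (hleft : ∀ t ∈ Ioo 0 c, M₁ ≤ g t)
    (hright : ∀ t ∈ Ioo c 1, g t ≤ M₂) {t : ℝ} (ht : t ∈ Ico (0 : ℝ) 1) :
    g t = if t ≤ c then M₁ else M₂ := by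
  split_ifs with htc
  · refine le_antisymm (hg.apply_le ht) ?_
    rcases ht.1.eq_or_lt with rfl | ht0
    · exact hg.2.2.2.2.1.ge
    rcases htc.lt_or_eq with htc | rfl
    · exact hleft t ⟨ht0, htc⟩
    · exact ge_of_tendsto (hg.2.2.1 t ⟨ht0, ht.2⟩) <| by
        filter_upwards [Ioo_mem_nhdsLT ht0] with s hs using hleft s hs
  · exact le_antisymm (hright t ⟨not_le.1 htc, ht.2⟩) (hg.le_apply ht)

theorem exists_Ioo_primitive_lt_extremalPrimitive (hg : memA M₁ f M₂ g) {c : ℝ}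
    (hc : (M₁ - M₂) * c = f - M₂) (hc0 : 0 < c) (hc1 : c ≤ 1)
    (hne : ∃ t ∈ Ico (0 : ℝ) 1, g t ≠ if t ≤ c then M₁ else M₂) :
    ∃ a b, 0 ≤ a ∧ a < b ∧ b ≤ 1 ∧
      ∀ t ∈ Ioo a b, ∫ u in 0..t, g u < extremalPrimitive M₁ f M₂ t := by
  obtain ⟨t, ht, hgt⟩ := hne
  by_cases hright : ∃ t₀ ∈ Ioo c 1, M₂ < g t₀
  · obtain ⟨t₀, ht₀, hgt₀⟩ := hright
    refine ⟨c, t₀, hc0.le, ht₀.1, ht₀.2.le, fun s hs => ?_⟩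
    rw [extremalPrimitive_of_ge (hc ▸ mul_le_mul_of_nonneg_left hs.1.le (sub_nonneg.2 hg.M₂_le_M₁))]
    exact hg.primitive_lt_of_lt_apply (hc0.le.trans hs.1.le) hs.2 ht₀.2 hgt₀
  by_cases hleft : ∃ t₀ ∈ Ioo 0 c, g t₀ < M₁
  · obtain ⟨t₀, ht₀, hgt₀⟩ := hleft
    refine ⟨t₀, c, ht₀.1.le, ht₀.2, hc1, fun s hs => ?_⟩
    rw [extremalPrimitive_of_le (hc ▸ mul_le_mul_of_nonneg_left hs.2.le (sub_nonneg.2 hg.M₂_le_M₁))]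
    exact hg.primitive_lt_of_apply_lt ht₀.1.le hs.1 (hs.2.le.trans hc1) hgt₀
  push Not at hright hleft
  exact absurd (hg.eq_ite_of_forall hleft hright ht) hgt

theorem intervalIntegrable_inv_mul_primitive (hg : memA M₁ f M₂ g) :
    IntervalIntegrable (fun t => 1 / t * ∫ u in 0..t, g u) volume 0 1 := by
  refine intervalIntegrable_of_continuousOn_of_abs_le (C := M₁) zero_le_one ?_ fun t ht => ?_
  · refine (continuousOn_const.div continuousOn_id fun t ht => ht.1.ne').mul ?_
    refine (intervalIntegral.continuousOn_primitive_interval' hg.intervalIntegrable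
      left_mem_uIcc).mono ?_
    rw [uIcc_of_le zero_le_one]
    exact Ioc_subset_Icc_self
  · have ht' : t ∈ Icc (0 : ℝ) 1 := Ioc_subset_Icc_self ht
    rw [abs_of_nonneg (mul_nonneg (by simpa using ht.1.le) (hg.primitive_nonneg ht')),
      one_div_mul_eq_div, div_le_iff₀ ht.1]
    exact hg.primitive_le_mul ht'

end memA

theorem stmt10_general (f M₁ M₂ : ℝ) (h1 : M₁ ≥ f) (h2 : f > M₂)
    (g : ℝ → ℝ) (hg : memA M₁ f M₂ g)
    (hne : ∃ t ∈ Set.Ico (0 : ℝ) 1,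
      g t ≠ if t ≤ (f - M₂) / (M₁ - M₂) then M₁ else M₂) :
    Ig g < f + (f - M₂) * Real.log ((M₁ - M₂) / (f - M₂)) := by
  set c := (f - M₂) / (M₁ - M₂)
  have hc : (M₁ - M₂) * c = f - M₂ := mul_div_cancel₀ _ (by linarith)
  have hc0 : 0 < c := div_pos (by linarith) (by linarith)
  have hc1 : c ≤ 1 := (div_le_one (by linarith)).2 (by linarith)
  obtain ⟨a, b, ha, hab, hb, hlt⟩ := hg.exists_Ioo_primitive_lt_extremalPrimitive hc hc0 hc1 hne
  rw [Ig_eq_intervalIntegral, ← one_div_div (f - M₂),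
    ← integral_inv_mul_extremalPrimitive hg.M₂_le_M₁ hc hc0 hc1]
  refine intervalIntegral_lt_of_le_of_lt_on_Ioo zero_le_one hg.intervalIntegrable_inv_mul_primitive
    (intervalIntegrable_inv_mul_extremalPrimitive hg.M₂_le_M₁ hc hc0 hc1) (fun t ht => ?_) ha hab hb
    fun t ht => ?_
  · exact mul_le_mul_of_nonneg_left (hg.primitive_le_extremalPrimitive (Ioc_subset_Icc_self ht))
      (one_div_nonneg.2 ht.1.le)
  · exact mul_lt_mul_of_pos_left (hlt t ht) (one_div_pos.2 (ha.trans_lt ht.1))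

theorem stmt10 (f M₁ M₂ : ℝ) (h1 : M₁ ≥ f) (h2 : f > M₂) (h3 : M₂ ≥ 0)
    (g : ℝ → ℝ) (hg : memA M₁ f M₂ g)
    (hne : ∃ t ∈ Set.Ico (0 : ℝ) 1,
      g t ≠ if t ≤ (f - M₂) / (M₁ - M₂) then M₁ else M₂) :
    Ig g < f + (f - M₂) * Real.log ((M₁ - M₂) / (f - M₂)) :=
  stmt10_general f M₁ M₂ h1 h2 g hg hne
end
end
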